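/- For every real number p, the matrix identity ρ(p) = (1 + √2)·p · P₀ + p · P₊ + (1 − (2 + √2)·p) · P_H holds in Matrix (Fin 2) (Fin 2) ℝ. Moreover, all three coefficients (1+√2)p, p, and 1−(2+√2)p are nonnegative if and only if 0 ≤ p ≤ (1 − tan(π/8))/2. -/
import Mathlib

open Real

/-- The stabilizer projector `P₀ = |0⟩⟨0|`. -/
noncomputable def P0 : Matrix (Fin 2) (Fin 2) ℝ := !![1, 0; 0, 0]

/-- The stabilizer projector `P₊ = |+⟩⟨+|`. -/
noncomputable def Pplus : Matrix (Fin 2) (Fin 2) ℝ := !![1/2, 1/2; 1/2, 1/2]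

/-- The magic projector `P_H = |H⟩⟨H|`. -/
noncomputable def PH : Matrix (Fin 2) (Fin 2) ℝ :=
  !![cos (π/8) ^ 2, cos (π/8) * sin (π/8);
     cos (π/8) * sin (π/8), sin (π/8) ^ 2]

/-- The magic state `|H⟩` after dephasing noise of rate `p`. -/
noncomputable def ρdeph (p : ℝ) : Matrix (Fin 2) (Fin 2) ℝ :=
  !![cos (π/8) ^ 2, (1 - 2*p) * cos (π/8) * sin (π/8);
     (1 - 2*p) * cos (π/8) * sin (π/8), sin (π/8) ^ 2]

lemma cos_sq_pi8 : cos (π/8) ^ 2 = (2 + Real.sqrt 2) / 4 := by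
  have h := Real.cos_sq (π/8)
  have : 2 * (π/8) = π/4 := by ring
  rw [this, Real.cos_pi_div_four] at h
  rw [h]; ring

lemma sin_sq_pi8 : sin (π/8) ^ 2 = (2 - Real.sqrt 2) / 4 := by
  have h := Real.sin_sq_eq_half_sub (π/8)
  have : 2 * (π/8) = π/4 := by ring
  rw [this, Real.cos_pi_div_four] at h
  rw [h]; ring

lemma cs_pi8 : cos (π/8) * sin (π/8) = Real.sqrt 2 / 4 := by
  have h := Real.sin_two_mul (π/8)
  have h2 : 2 * (π/8) = π/4 := by ring
  rw [h2, Real.sin_pi_div_four] at h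
  nlinarith [h]

lemma tan_pi8 : tan (π/8) = Real.sqrt 2 - 1 := by
  have hs2 : (Real.sqrt 2) ^ 2 = 2 := Real.sq_sqrt (by norm_num)
  have hs2pos : (0:ℝ) < Real.sqrt 2 := by positivity
  have hpi : (0:ℝ) < π := Real.pi_pos
  have hcpos : 0 < cos (π/8) := Real.cos_pos_of_mem_Ioo ⟨by linarith, by linarith⟩
  have hspos : 0 < sin (π/8) := Real.sin_pos_of_pos_of_lt_pi (by linarith) (by linarith)
  have ht : tan (π/8) = sin (π/8) / cos (π/8) := Real.tan_eq_sin_div_cos _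
  have htpos : 0 < tan (π/8) := by rw [ht]; positivity
  have htsq : tan (π/8) ^ 2 = 3 - 2 * Real.sqrt 2 := by
    rw [ht, div_pow, sin_sq_pi8, cos_sq_pi8]
    rw [div_eq_iff (by nlinarith)]
    nlinarith
  have hfac : (tan (π/8) - (Real.sqrt 2 - 1)) * (tan (π/8) + (Real.sqrt 2 - 1)) = 0 := by
    nlinarith [htsq]
  have h2 : tan (π/8) + (Real.sqrt 2 - 1) > 0 := by nlinarith
  have := mul_eq_zero.mp hfac
  rcases this with h | h
  · linarith
  · linarith

theorem stmt_8 (p : ℝ) :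
    ρdeph p = ((1 + Real.sqrt 2) * p) • P0 + p • Pplus + (1 - (2 + Real.sqrt 2) * p) • PH
    ∧ ((0 ≤ (1 + Real.sqrt 2) * p ∧ 0 ≤ p ∧ 0 ≤ 1 - (2 + Real.sqrt 2) * p)
        ↔ (0 ≤ p ∧ p ≤ (1 - tan (π/8)) / 2)) := by
  have hs2 : (Real.sqrt 2) ^ 2 = 2 := Real.sq_sqrt (by norm_num)
  have hs2pos : (0:ℝ) < Real.sqrt 2 := by positivity
  constructor
  · have hc2 := cos_sq_pi8
    have hs2' := sin_sq_pi8
    have hcs := cs_pi8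
    unfold ρdeph P0 Pplus PH
    set c := cos (π/8) with hc
    set s := sin (π/8) with hs
    ext i j
    fin_cases i <;> fin_cases j <;> simp
    · linear_combination ((2 + Real.sqrt 2) * p) * hc2 + (p/4) * hs2
    · linear_combination (Real.sqrt 2 * p) * hcs + (p/4) * hs2
    · linear_combination (Real.sqrt 2 * p) * hcs + (p/4) * hs2
    · linear_combination ((2 + Real.sqrt 2) * p) * hs2' - (p/4) * hs2
  · rw [tan_pi8]
    constructor
    · rintro ⟨h1, h2, h3⟩
      refine ⟨h2, ?_⟩
      nlinarith
    · rintro ⟨h1, h2⟩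
      refine ⟨by nlinarith, h1, by nlinarith⟩
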